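/- arXiv:1508.02340 — 2 statements merged into one kernel-verified Lean document; each statement's English description precedes it below -/
import Mathlib

section
/- Let ν : ℝ≥0 → ℝ be positive, continuous, integrable on [0,∞), and suppose there is K > 0 with |ν'(t)| ≤ K·ν(t) for all t. If x ∈ W¹₂(ℝ₊,ℝⁿ;ν) (i.e. ∫‖x‖²ν < ∞ and ∫‖ẋ‖²ν < ∞), then the function f(t) = ‖x(t)‖²·ν(t) belongs to W¹₁(ℝ₊,ℝ) and consequently ‖x(t)‖²·ν(t) → 0 as t → ∞. -/
/-!
`f = ‖x‖² ν` has derivative `f' = 2⟪x, ẋ⟫ ν + ‖x‖² ν'`. Since `2|⟪x, ẋ⟫| ≤ ‖x‖² + ‖ẋ‖²` and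
`|ν'| ≤ K ν`, we get `|f'| ≤ ‖x‖² ν + ‖ẋ‖² ν + K ‖x‖² ν`, which is integrable. A function that is
integrable on `[0, ∞)` together with its derivative tends to `0` at infinity.
-/

open MeasureTheory Filter

theorem hasDerivAt_norm_sq_mul {E : Type*} [NormedAddCommGroup E] [InnerProductSpace ℝ E]
    {x : ℝ → E} {ν : ℝ → ℝ} {x' : E} {ν' t : ℝ}
    (hx : HasDerivAt x x' t) (hν : HasDerivAt ν ν' t) :
    HasDerivAt (fun s => ‖x s‖ ^ 2 * ν s) (2 * inner ℝ (x t) x' * ν t + ‖x t‖ ^ 2 * ν') t :=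
  hx.norm_sq.mul hν

theorem aestronglyMeasurable_of_hasDerivAt {F : Type*} [NormedAddCommGroup F] [NormedSpace ℝ F]
    [CompleteSpace F] {f f' : ℝ → F} {s : Set ℝ} (hs : MeasurableSet s)
    (hf : ∀ t ∈ s, HasDerivAt f (f' t) t) : AEStronglyMeasurable f' (volume.restrict s) :=
  (aestronglyMeasurable_deriv f _).congr <|
    (ae_restrict_mem hs).mono fun t ht => (hf t ht).deriv

theorem abs_two_mul_inner_le {E : Type*} [NormedAddCommGroup E] [InnerProductSpace ℝ E]
    (a b : E) : |2 * inner ℝ a b| ≤ ‖a‖ ^ 2 + ‖b‖ ^ 2 := by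
  rw [abs_mul, abs_two]
  nlinarith [abs_real_inner_le_norm a b, two_mul_le_add_sq ‖a‖ ‖b‖]

theorem abs_weighted_norm_sq_deriv_le {E : Type*} [NormedAddCommGroup E] [InnerProductSpace ℝ E]
    (a b : E) {w w' K : ℝ} (hw : 0 ≤ w) (hw' : |w'| ≤ K * w) :
    |2 * inner ℝ a b * w + ‖a‖ ^ 2 * w'| ≤ ‖a‖ ^ 2 * w + ‖b‖ ^ 2 * w + K * (‖a‖ ^ 2 * w) :=
  calc |2 * inner ℝ a b * w + ‖a‖ ^ 2 * w'|
      ≤ |2 * inner ℝ a b| * w + ‖a‖ ^ 2 * |w'| := by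
        grw [abs_add_le, abs_mul, abs_mul (‖a‖ ^ 2), abs_of_nonneg hw, abs_of_nonneg (sq_nonneg ‖a‖)]
    _ ≤ (‖a‖ ^ 2 + ‖b‖ ^ 2) * w + ‖a‖ ^ 2 * (K * w) := by
        gcongr
        exact abs_two_mul_inner_le a b
    _ = ‖a‖ ^ 2 * w + ‖b‖ ^ 2 * w + K * (‖a‖ ^ 2 * w) := by ring

theorem integrableOn_deriv_norm_sq_mul {E : Type*} [NormedAddCommGroup E]
    [InnerProductSpace ℝ E] [CompleteSpace E] {x x' : ℝ → E} {ν ν' : ℝ → ℝ} {K : ℝ} {s : Set ℝ}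
    (hs : MeasurableSet s) (hν : ∀ t ∈ s, 0 ≤ ν t) (hνderiv : ∀ t ∈ s, HasDerivAt ν (ν' t) t)
    (hνbound : ∀ t ∈ s, |ν' t| ≤ K * ν t) (hxderiv : ∀ t ∈ s, HasDerivAt x (x' t) t)
    (hx : IntegrableOn (fun t => ‖x t‖ ^ 2 * ν t) s)
    (hx' : IntegrableOn (fun t => ‖x' t‖ ^ 2 * ν t) s) :
    IntegrableOn (fun t => 2 * inner ℝ (x t) (x' t) * ν t + ‖x t‖ ^ 2 * ν' t) s :=
  Integrable.mono' ((hx.add hx').add (hx.const_mul K))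
    (aestronglyMeasurable_of_hasDerivAt hs fun t ht =>
      hasDerivAt_norm_sq_mul (hxderiv t ht) (hνderiv t ht))
    ((ae_restrict_mem hs).mono fun t ht =>
      abs_weighted_norm_sq_deriv_le _ _ (hν t ht) (hνbound t ht))

theorem sq_norm_mul_weight_W11_and_tendsto_zero_general {n : ℕ}
    (ν ν' : ℝ → ℝ) (K : ℝ)
    (hνpos : ∀ t ≥ (0 : ℝ), 0 < ν t)
    (hνderiv : ∀ t ≥ (0 : ℝ), HasDerivAt ν (ν' t) t)
    (hνbound : ∀ t ≥ (0 : ℝ), |ν' t| ≤ K * ν t)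
    (x x' : ℝ → EuclideanSpace ℝ (Fin n))
    (hxderiv : ∀ t ≥ (0 : ℝ), HasDerivAt x (x' t) t)
    (hx2 : IntegrableOn (fun t => ‖x t‖ ^ 2 * ν t) (Set.Ici 0))
    (hx'2 : IntegrableOn (fun t => ‖x' t‖ ^ 2 * ν t) (Set.Ici 0)) :
    IntegrableOn (fun t => ‖x t‖ ^ 2 * ν t) (Set.Ici 0) ∧
    IntegrableOn
      (fun t => 2 * (inner ℝ (x t) (x' t) : ℝ) * ν t + ‖x t‖ ^ 2 * ν' t)
      (Set.Ici 0) ∧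
    Tendsto (fun t => ‖x t‖ ^ 2 * ν t) atTop (nhds 0) := by
  have hderiv_int := integrableOn_deriv_norm_sq_mul measurableSet_Ici
    (fun t ht => (hνpos t ht).le) hνderiv hνbound hxderiv hx2 hx'2
  refine ⟨hx2, hderiv_int, ?_⟩
  exact tendsto_zero_of_hasDerivAt_of_integrableOn_Ioi (a := 0)
    (fun t ht => hasDerivAt_norm_sq_mul (hxderiv t ht.le) (hνderiv t ht.le))
    (hderiv_int.mono_set Set.Ioi_subset_Ici_self) (hx2.mono_set Set.Ioi_subset_Ici_self)

/-- Let `ν` be a positive, continuous, integrable weight on `[0,∞)` with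
`|ν'(t)| ≤ K·ν(t)`. If `x ∈ W¹₂(ℝ₊, ℝⁿ; ν)`, then `f(t) = ‖x(t)‖² ν(t)`
belongs to `W¹₁(ℝ₊, ℝ)` (both `f` and its derivative
`f'(t) = 2⟨x(t), ẋ(t)⟩ ν(t) + ‖x(t)‖² ν'(t)` are integrable) and
consequently `‖x(t)‖² ν(t) → 0` as `t → ∞`. -/
theorem sq_norm_mul_weight_W11_and_tendsto_zero {n : ℕ}
    (ν ν' : ℝ → ℝ) (K : ℝ) (hK : 0 < K)
    (hνpos : ∀ t ≥ (0 : ℝ), 0 < ν t)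
    (hνcont : ContinuousOn ν (Set.Ici 0))
    (hνint : IntegrableOn ν (Set.Ici 0))
    (hνderiv : ∀ t ≥ (0 : ℝ), HasDerivAt ν (ν' t) t)
    (hνbound : ∀ t ≥ (0 : ℝ), |ν' t| ≤ K * ν t)
    (x x' : ℝ → EuclideanSpace ℝ (Fin n))
    (hxderiv : ∀ t ≥ (0 : ℝ), HasDerivAt x (x' t) t)
    (hx2 : IntegrableOn (fun t => ‖x t‖ ^ 2 * ν t) (Set.Ici 0))
    (hx'2 : IntegrableOn (fun t => ‖x' t‖ ^ 2 * ν t) (Set.Ici 0)) :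
    IntegrableOn (fun t => ‖x t‖ ^ 2 * ν t) (Set.Ici 0) ∧
    IntegrableOn
      (fun t => 2 * (inner ℝ (x t) (x' t) : ℝ) * ν t + ‖x t‖ ^ 2 * ν' t)
      (Set.Ici 0) ∧
    Tendsto (fun t => ‖x t‖ ^ 2 * ν t) atTop (nhds 0) :=
  sq_norm_mul_weight_W11_and_tendsto_zero_general ν ν' K hνpos hνderiv hνbound x x' hxderiv hx2 hx'2
end

section
/- Let ν be a positive continuous integrable weight with |ν'(t)| ≤ K·ν(t). If x ∈ W¹₂(ℝ₊,ℝⁿ;ν) and y ∈ W¹₂(ℝ₊,ℝⁿ;ν⁻¹), then h(t) = ⟨x(t), y(t)⟩ belongs to W¹₁(ℝ₊,ℝ) and hence ⟨x(t),y(t)⟩ → 0 as t → ∞. -/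
/-!
By the weighted Cauchy–Schwarz (AM–GM) bound `‖a‖‖b‖ ≤ (‖a‖²ν + ‖b‖²ν⁻¹)/2`, the inner product of a
function in `L²(ν)` with one in `L²(ν⁻¹)` is integrable. Applied to `(x, y)`, `(ẋ, y)` and
`(x, ẏ)` this puts `h = ⟨x, y⟩` and `h' = ⟨ẋ, y⟩ + ⟨x, ẏ⟩` in `L¹(ℝ₊)`; a function with
integrable derivative has a limit at infinity, and since `h` itself is integrable that limit is `0`.
-/

open MeasureTheory Filter Set

lemma two_mul_le_sq_mul_add_sq_mul_inv {a b w : ℝ} (hw : 0 < w) :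
    2 * (a * b) ≤ a ^ 2 * w + b ^ 2 * w⁻¹ := by
  have key : 0 ≤ w⁻¹ * (a * w - b) ^ 2 := by positivity
  have expand : w⁻¹ * (a * w - b) ^ 2 = a ^ 2 * w - 2 * (a * b) + b ^ 2 * w⁻¹ := by
    field_simp
    ring
  linarith

lemma integrable_inner_of_integrable_sq_mul_weight {α 𝕜 E : Type*} [MeasurableSpace α]
    {μ : Measure α} [RCLike 𝕜] [NormedAddCommGroup E] [InnerProductSpace 𝕜 E]
    {f g : α → E} {w : α → ℝ} (hf : AEStronglyMeasurable f μ) (hg : AEStronglyMeasurable g μ)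
    (hw : ∀ᵐ t ∂μ, 0 < w t) (hfw : Integrable (fun t => ‖f t‖ ^ 2 * w t) μ)
    (hgw : Integrable (fun t => ‖g t‖ ^ 2 * (w t)⁻¹) μ) :
    Integrable (fun t => inner 𝕜 (f t) (g t)) μ := by
  refine Integrable.mono' ((hfw.add hgw).div_const 2) (hf.inner hg) ?_
  filter_upwards [hw] with t ht
  have amgm := two_mul_le_sq_mul_add_sq_mul_inv (a := ‖f t‖) (b := ‖g t‖) ht
  calc ‖inner 𝕜 (f t) (g t)‖ ≤ ‖f t‖ * ‖g t‖ := norm_inner_le_norm _ _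
    _ ≤ (‖f t‖ ^ 2 * w t + ‖g t‖ ^ 2 * (w t)⁻¹) / 2 := by linarith

lemma aestronglyMeasurable_deriv_of_forall_hasDerivAt {E : Type*} [NormedAddCommGroup E]
    [NormedSpace ℝ E] [CompleteSpace E] [SecondCountableTopology E] {f f' : ℝ → E} {s : Set ℝ}
    {μ : Measure ℝ} (hs : MeasurableSet s) (hderiv : ∀ t ∈ s, HasDerivAt f (f' t) t) :
    AEStronglyMeasurable f' (μ.restrict s) :=
  (aestronglyMeasurable_deriv f _).congr <|
    ae_restrict_of_forall_mem hs fun t ht => (hderiv t ht).deriv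

lemma aestronglyMeasurable_of_forall_hasDerivAt {E : Type*} [NormedAddCommGroup E]
    [NormedSpace ℝ E] {f f' : ℝ → E} {s : Set ℝ} {μ : Measure ℝ} (hs : MeasurableSet s)
    (hderiv : ∀ t ∈ s, HasDerivAt f (f' t) t) :
    AEStronglyMeasurable f (μ.restrict s) :=
  ContinuousOn.aestronglyMeasurable
    (fun t ht => (hderiv t ht).continuousAt.continuousWithinAt) hs

theorem inner_W11_and_tendsto_zero_general {n : ℕ}
    (ν : ℝ → ℝ)
    (hνpos : ∀ t ≥ (0 : ℝ), 0 < ν t)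
    (x x' y y' : ℝ → EuclideanSpace ℝ (Fin n))
    (hxderiv : ∀ t ≥ (0 : ℝ), HasDerivAt x (x' t) t)
    (hyderiv : ∀ t ≥ (0 : ℝ), HasDerivAt y (y' t) t)
    (hx2 : IntegrableOn (fun t => ‖x t‖ ^ 2 * ν t) (Set.Ici 0))
    (hx'2 : IntegrableOn (fun t => ‖x' t‖ ^ 2 * ν t) (Set.Ici 0))
    (hy2 : IntegrableOn (fun t => ‖y t‖ ^ 2 * (ν t)⁻¹) (Set.Ici 0))
    (hy'2 : IntegrableOn (fun t => ‖y' t‖ ^ 2 * (ν t)⁻¹) (Set.Ici 0)) :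
    IntegrableOn (fun t => (inner ℝ (x t) (y t) : ℝ)) (Set.Ici 0) ∧
    IntegrableOn
      (fun t => (inner ℝ (x' t) (y t) : ℝ) + (inner ℝ (x t) (y' t) : ℝ))
      (Set.Ici 0) ∧
    Tendsto (fun t => (inner ℝ (x t) (y t) : ℝ)) atTop (nhds 0) := by
  have hν : ∀ᵐ t ∂volume.restrict (Ici 0), 0 < ν t :=
    ae_restrict_of_forall_mem measurableSet_Ici hνpos
  have hx := aestronglyMeasurable_of_forall_hasDerivAt (μ := volume) measurableSet_Ici hxderiv
  have hy := aestronglyMeasurable_of_forall_hasDerivAt (μ := volume) measurableSet_Ici hyderiv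
  have hx' :=
    aestronglyMeasurable_deriv_of_forall_hasDerivAt (μ := volume) measurableSet_Ici hxderiv
  have hy' :=
    aestronglyMeasurable_deriv_of_forall_hasDerivAt (μ := volume) measurableSet_Ici hyderiv
  have hxy := integrable_inner_of_integrable_sq_mul_weight (𝕜 := ℝ) hx hy hν hx2 hy2
  have hx'y := integrable_inner_of_integrable_sq_mul_weight (𝕜 := ℝ) hx' hy hν hx'2 hy2
  have hxy' := integrable_inner_of_integrable_sq_mul_weight (𝕜 := ℝ) hx hy' hν hx2 hy'2
  refine ⟨hxy, hx'y.add hxy', ?_⟩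
  refine tendsto_zero_of_hasDerivAt_of_integrableOn_Ioi (a := 0) (fun t ht => ?_)
    (IntegrableOn.mono_set (hx'y.add hxy') Ioi_subset_Ici_self)
    (IntegrableOn.mono_set hxy Ioi_subset_Ici_self)
  exact ((hxderiv t ht.le).inner ℝ (hyderiv t ht.le)).congr_deriv (add_comm _ _)

/-- Let `ν` be a positive, continuous, integrable weight with `|ν'(t)| ≤ K·ν(t)`.
If `x ∈ W¹₂(ℝ₊, ℝⁿ; ν)` and `y ∈ W¹₂(ℝ₊, ℝⁿ; ν⁻¹)`, then
`h(t) = ⟨x(t), y(t)⟩` belongs to `W¹₁(ℝ₊, ℝ)` (both `h` and its derivative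
`h'(t) = ⟨ẋ(t), y(t)⟩ + ⟨x(t), ẏ(t)⟩` are integrable) and hence
`⟨x(t), y(t)⟩ → 0` as `t → ∞`. -/
theorem inner_W11_and_tendsto_zero {n : ℕ}
    (ν ν' : ℝ → ℝ) (K : ℝ) (hK : 0 < K)
    (hνpos : ∀ t ≥ (0 : ℝ), 0 < ν t)
    (hνcont : ContinuousOn ν (Set.Ici 0))
    (hνint : IntegrableOn ν (Set.Ici 0))
    (hνderiv : ∀ t ≥ (0 : ℝ), HasDerivAt ν (ν' t) t)
    (hνbound : ∀ t ≥ (0 : ℝ), |ν' t| ≤ K * ν t)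
    (x x' y y' : ℝ → EuclideanSpace ℝ (Fin n))
    (hxderiv : ∀ t ≥ (0 : ℝ), HasDerivAt x (x' t) t)
    (hyderiv : ∀ t ≥ (0 : ℝ), HasDerivAt y (y' t) t)
    (hx2 : IntegrableOn (fun t => ‖x t‖ ^ 2 * ν t) (Set.Ici 0))
    (hx'2 : IntegrableOn (fun t => ‖x' t‖ ^ 2 * ν t) (Set.Ici 0))
    (hy2 : IntegrableOn (fun t => ‖y t‖ ^ 2 * (ν t)⁻¹) (Set.Ici 0))
    (hy'2 : IntegrableOn (fun t => ‖y' t‖ ^ 2 * (ν t)⁻¹) (Set.Ici 0)) :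
    IntegrableOn (fun t => (inner ℝ (x t) (y t) : ℝ)) (Set.Ici 0) ∧
    IntegrableOn
      (fun t => (inner ℝ (x' t) (y t) : ℝ) + (inner ℝ (x t) (y' t) : ℝ))
      (Set.Ici 0) ∧
    Tendsto (fun t => (inner ℝ (x t) (y t) : ℝ)) atTop (nhds 0) :=
  inner_W11_and_tendsto_zero_general ν hνpos x x' y y' hxderiv hyderiv hx2 hx'2 hy2 hy'2
end
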